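/- Let G_z be an invertible M×M complex matrix (in particular any positive definite Hermitian matrix), let W = [W_s, W_z] ∈ ℂ^{M×M} be invertible with W_s ∈ ℂ^{M×K} its first K columns, let R ∈ ℂ^{(M−K)×(M−K)} be invertible, and set W′ = [W_s, W_z R]. Then the column space of ((W′)^H G_z)^{−1} E_z equals the column space of (W^H G_z)^{−1} E_z. -/

import Mathlib

/- STATEMENT 10.
M×M complex matrices are encoded as matrices indexed by `Fin K ⊕ Fin L`,
where `M = K + L`, `K ≥ 1`, `L = M - K ≥ 1`. For `W`, its first `K` columns
(`Sum.inl`) form `W_s` and its last `L` columns (`Sum.inr`) form `W_z`.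
`E_z = [e_{K+1}, …, e_M]`. The column space of a matrix `A` is
`Submodule.span ℂ (Set.range Aᵀ)` (the span of the columns of `A`, i.e. of the
rows of `Aᵀ`). -/

open Matrix

/-- `E_z = [e_{K+1}, …, e_M]`. -/
def Ez (K L : ℕ) : Matrix (Fin K ⊕ Fin L) (Fin L) ℂ :=
  Matrix.of fun i j => if i = Sum.inr j then 1 else 0

/-!
Writing `D = diag(1, R)` we have `W' = W D`, hence `(W'ᴴ G_z)⁻¹ = (Wᴴ G_z)⁻¹ (Dᴴ)⁻¹`, and
`(Dᴴ)⁻¹ E_z = E_z (Rᴴ)⁻¹` because `E_z` only sees the lower-right block of `D`. So the two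
matrices differ by the invertible right factor `(Rᴴ)⁻¹`, which does not change the column space.
-/

theorem span_range_transpose_mul_of_isUnit_det {R m n : Type*} [CommRing R] [Fintype n]
    [DecidableEq n] (A : Matrix m n R) {S : Matrix n n R} (hS : IsUnit S.det) :
    Submodule.span R (Set.range (A * S)ᵀ) = Submodule.span R (Set.range Aᵀ) := by
  change Submodule.span R (Set.range (A * S).col) = Submodule.span R (Set.range A.col)
  rw [← range_mulVecLin, ← range_mulVecLin, mulVecLin_mul,
    LinearMap.range_comp_of_range_eq_top]
  exact LinearMap.range_eq_top.mpr
    (mulVec_surjective_iff_isUnit.mpr ((isUnit_iff_isUnit_det S).mpr hS))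

section BlockMatrix

variable {R : Type*} [CommRing R] {m n₁ n₂ : Type*}
  [Fintype n₁] [DecidableEq n₁] [Fintype n₂]

theorem mul_fromBlocks_one_zero_zero (W : Matrix m (n₁ ⊕ n₂) R) (S : Matrix n₂ n₂ R) :
    W * fromBlocks (1 : Matrix n₁ n₁ R) 0 0 S =
      fromCols (W.submatrix id Sum.inl) (W.submatrix id Sum.inr * S) := by
  rw [← fromCols_toCols W, fromCols_mul_fromBlocks]
  simp only [Matrix.mul_one, Matrix.mul_zero, add_zero, zero_add]
  rfl

variable [DecidableEq n₂]

theorem inv_fromBlocks_one_zero_zero {S : Matrix n₂ n₂ R} (hS : IsUnit S.det) :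
    (fromBlocks (1 : Matrix n₁ n₁ R) 0 0 S)⁻¹ = fromBlocks 1 0 0 S⁻¹ := by
  rw [inv_fromBlocks_zero₂₁_of_isUnit_iff _ _ _
    (iff_of_true isUnit_one ((isUnit_iff_isUnit_det S).mpr hS))]
  simp

end BlockMatrix

theorem Ez_eq_fromRows (K L : ℕ) : Ez K L = fromRows 0 (1 : Matrix (Fin L) (Fin L) ℂ) := by
  ext (i | i) j <;> simp [Ez, one_apply]

theorem fromBlocks_one_zero_zero_mul_Ez (K L : ℕ) (S : Matrix (Fin L) (Fin L) ℂ) :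
    fromBlocks (1 : Matrix (Fin K) (Fin K) ℂ) 0 0 S * Ez K L = Ez K L * S := by
  rw [Ez_eq_fromRows, fromBlocks_mul_fromRows, fromRows_mul]
  simp

theorem colSpace_inv_WHGz_Ez_invariant_general (K L : ℕ)
    (Gz : Matrix (Fin K ⊕ Fin L) (Fin K ⊕ Fin L) ℂ)
    (W : Matrix (Fin K ⊕ Fin L) (Fin K ⊕ Fin L) ℂ)
    (R : Matrix (Fin L) (Fin L) ℂ) (hR : IsUnit R.det)
    (W' : Matrix (Fin K ⊕ Fin L) (Fin K ⊕ Fin L) ℂ)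
    (hW' : W' = Matrix.fromCols (W.submatrix id Sum.inl)
      ((W.submatrix id Sum.inr) * R)) :
    Submodule.span ℂ (Set.range ((W'ᴴ * Gz)⁻¹ * Ez K L)ᵀ) =
      Submodule.span ℂ (Set.range ((Wᴴ * Gz)⁻¹ * Ez K L)ᵀ) := by
  have hRH : IsUnit Rᴴ.det := by rw [det_conjTranspose]; exact hR.star
  have hW'_eq : (W'ᴴ * Gz)⁻¹ * Ez K L = (Wᴴ * Gz)⁻¹ * Ez K L * Rᴴ⁻¹ := by
    rw [hW', ← mul_fromBlocks_one_zero_zero, conjTranspose_mul, fromBlocks_conjTranspose,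
      conjTranspose_one, conjTranspose_zero, conjTranspose_zero, Matrix.mul_assoc,
      Matrix.mul_inv_rev, Matrix.mul_assoc, inv_fromBlocks_one_zero_zero hRH,
      fromBlocks_one_zero_zero_mul_Ez, Matrix.mul_assoc]
  rw [hW'_eq]
  exact span_range_transpose_mul_of_isUnit_det _ (isUnit_nonsing_inv_det _ hRH)

/-- Replacing `W_z` by `W_z R` (with `R` invertible) does not change the column
space of `(Wᴴ G_z)⁻¹ E_z`. -/
theorem colSpace_inv_WHGz_Ez_invariant (K L : ℕ) (hK : 1 ≤ K) (hL : 1 ≤ L)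
    (Gz : Matrix (Fin K ⊕ Fin L) (Fin K ⊕ Fin L) ℂ) (hGz : IsUnit Gz.det)
    (W : Matrix (Fin K ⊕ Fin L) (Fin K ⊕ Fin L) ℂ) (hW : IsUnit W.det)
    (R : Matrix (Fin L) (Fin L) ℂ) (hR : IsUnit R.det)
    (W' : Matrix (Fin K ⊕ Fin L) (Fin K ⊕ Fin L) ℂ)
    (hW' : W' = Matrix.fromCols (W.submatrix id Sum.inl)
      ((W.submatrix id Sum.inr) * R)) :
    Submodule.span ℂ (Set.range ((W'ᴴ * Gz)⁻¹ * Ez K L)ᵀ) =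
      Submodule.span ℂ (Set.range ((Wᴴ * Gz)⁻¹ * Ez K L)ᵀ) :=
  colSpace_inv_WHGz_Ez_invariant_general K L Gz W R hR W' hW'
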